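/- Let r, s ≥ 1 and let σ be the permutation i ↦ 4r+2s−1−i of {0,…,4r+2s−1}. Then: (a) A ↦ σ[A] is a graph involution of the Kneser graph KG_{2r,2s} which flips the edge {{0,…,2r−1}, {2r+2s,…,4r+2s−1}}; and (b) the map sending an r-element set M ⊆ {0,…,2r+s−1} to the vertex {M ∪ σ[M]} of (KG_{2r,2s})^{Z₂} (note that M ∪ σ[M] is a σ-invariant 2r-element set, so its orbit is a singleton) is a graph homomorphism from KG_{r,s} to (KG_{2r,2s})^{Z₂}, where the vertices of KG_{r,s} are identified with r-subsets of {0,…,2r+s−1}. -/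

import Mathlib

open Metric unitInterval

noncomputable section

/-- The unit sphere `S^k` in `ℝ^(k+1)`. -/
abbrev Sph (k : ℕ) : Type := Metric.sphere (0 : EuclideanSpace ℝ (Fin (k+1))) 1

/-- `φ` is a multihomomorphism from `G` to `H`. -/
def IsMultihom {V W : Type*} (G : SimpleGraph V) (H : SimpleGraph W)
    (φ : V → Set W) : Prop :=
  (∀ v, (φ v).Nonempty) ∧ ∀ ⦃u v⦄, G.Adj u v → ∀ a ∈ φ u, ∀ b ∈ φ v, H.Adj a b

/-- The Hom space `|Hom(G,H)|`. -/
def HomSpace {V W : Type*} [Fintype W] (G : SimpleGraph V) (H : SimpleGraph W) : Type _ :=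
  {x : V → stdSimplex ℝ W // IsMultihom G H fun v => {w | (x v : W → ℝ) w ≠ 0}}

instance {V W : Type*} [Fintype W] (G : SimpleGraph V) (H : SimpleGraph W) :
    TopologicalSpace (HomSpace G H) :=
  inferInstanceAs (TopologicalSpace {_x : V → stdSimplex ℝ W // _})

/-- The map `|Hom(G,H)| → |Hom(G',H)|` induced by a graph homomorphism `κ : G' → G`;
for `G' = G` and `κ` an involution this is the induced (left) involution. -/
def pull {V V' W : Type*} [Fintype W] {G : SimpleGraph V} {G' : SimpleGraph V'}
    {H : SimpleGraph W} (κ : G' →g G) (x : HomSpace G H) : HomSpace G' H :=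
  ⟨fun v => x.1 (κ v), fun v => x.2.1 (κ v), fun _ _ huv => x.2.2 (κ.map_adj huv)⟩

/-- The (right) involution of `|Hom(G,H)|` induced by an involution `β` of `H`. -/
def rightAct {V W : Type*} [Fintype W] {G : SimpleGraph V} {H : SimpleGraph W}
    (β : H →g H) (hβ : Function.Involutive β) (x : HomSpace G H) : HomSpace G H :=
  ⟨fun v => ⟨fun b => (x.1 v : W → ℝ) (β b),
    fun b => (x.1 v).2.1 (β b),
    by
      rw [← (x.1 v).2.2]
      exact Fintype.sum_bijective β hβ.bijective _ _ fun b => rfl⟩,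
   fun v => by
      obtain ⟨w, hw⟩ := x.2.1 v
      exact ⟨β w, by show (x.1 v : W → ℝ) (β (β w)) ≠ 0; rw [hβ w]; exact hw⟩,
   fun u v huv a ha b hb => by
      have := x.2.2 huv (β a) ha (β b) hb
      simpa [hβ a, hβ b] using β.map_adj this⟩

/-- The complete graph `K₂` on `{0,1}`. -/
abbrev K2 : SimpleGraph (Fin 2) := SimpleGraph.completeGraph (Fin 2)

/-- The flip involution of `K₂`. -/
def flipK2 : K2 →g K2 :=
  ⟨fun v => 1 - v, fun {a b} h => by fin_cases a <;> fin_cases b <;> simp_all⟩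

/-- The cycle `C_m` on `ℤ/m`. -/
def cycle (m : ℕ) : SimpleGraph (ZMod m) where
  Adj u v := u ≠ v ∧ (u + 1 = v ∨ v + 1 = u)
  symm := ⟨fun _ _ h => ⟨h.1.symm, h.2.symm⟩⟩
  loopless := ⟨fun _ h => h.1 rfl⟩

/-- The involution `v ↦ (m-1) - v = -1 - v` of the cycle `C_m`. -/
def cycFlip (m : ℕ) : cycle m →g cycle m :=
  ⟨fun v => -1 - v, fun {a b} h => by
    show _ ≠ _ ∧ _
    refine ⟨fun e => h.1 (sub_right_injective e), ?_⟩
    rcases h.2 with e | e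
    · exact Or.inr (by rw [← e]; ring)
    · exact Or.inl (by rw [← e]; ring)⟩

/-- `X` is `m`-connected: nonempty, path-connected, and `πᵢ X` trivial for `1 ≤ i ≤ m`. -/
def MConnected (m : ℕ) (X : Type*) [TopologicalSpace X] : Prop :=
  Nonempty X ∧ PathConnectedSpace X ∧
    ∀ i, 1 ≤ i → i ≤ m → ∀ x : X, Subsingleton (HomotopyGroup (Fin i) X x)

end

noncomputable section

/-- The vertices of `G^{Z₂}`: the sets `{u, α u}` for vertices `u`. -/
def FixVert {V : Type*} (α : V → V) : Type _ := {A : Set V // ∃ u, A = {u, α u}}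

instance {V : Type*} [Finite V] (α : V → V) : Finite (FixVert α) :=
  inferInstanceAs (Finite {_A : Set V // _})

noncomputable instance {V : Type*} [Fintype V] (α : V → V) : Fintype (FixVert α) :=
  Fintype.ofFinite _

/-- The graph `G^{Z₂}` associated to a graph `G` with involution `α`. -/
def fixGraph {V : Type*} (G : SimpleGraph V) (α : G →g G) (hα : Function.Involutive α) :
    SimpleGraph (FixVert (α : V → V)) where
  Adj A B := ∃ u v, A.1 = {u, α u} ∧ B.1 = {v, α v} ∧ G.Adj u v ∧ G.Adj u (α v)
  symm := by
    refine ⟨?_⟩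
    rintro _ _ ⟨u, v, hA, hB, h1, h2⟩
    refine ⟨v, u, hB, hA, h1.symm, ?_⟩
    have := α.map_adj h2
    rw [hα] at this
    exact this.symm
  loopless := by
    refine ⟨?_⟩
    rintro A ⟨u, v, hA, hB, h1, h2⟩
    have hv : v ∈ ({u, α u} : Set V) := by
      rw [← hA, hB]; exact Set.mem_insert _ _
    simp only [Set.mem_insert_iff, Set.mem_singleton_iff] at hv
    rcases hv with rfl | rfl
    · exact h1.ne rfl
    · rw [hα] at h2
      exact h2.ne rfl

lemma flipK2_involutive : Function.Involutive (flipK2 : Fin 2 → Fin 2) := fun v => by fin_cases v <;> rfl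

lemma cycFlip_involutive (m : ℕ) : Function.Involutive (cycFlip m : ZMod m → ZMod m) :=
  fun v => by show -1 - (-1 - v) = v; ring

end

noncomputable section

/-- Vertices of the Kneser graph `KG_{n,l}`: `n`-element subsets of `{0,…,N-1}`. -/
def KGVert (n N : ℕ) : Type := {A : Finset (Fin N) // A.card = n}

instance (n N : ℕ) : Fintype (KGVert n N) :=
  inferInstanceAs (Fintype {A : Finset (Fin N) // A.card = n})

/-- The Kneser graph `KG_{n,l}`, on the `n`-subsets of `{0,…,2n+l-1}`;
sets are adjacent iff they are disjoint. -/
def KG (n l : ℕ) : SimpleGraph (KGVert n (2 * n + l)) where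
  Adj A B := A ≠ B ∧ Disjoint A.1 B.1
  symm := ⟨fun _ _ h => ⟨h.1.symm, h.2.symm⟩⟩
  loopless := ⟨fun _ h => h.1 rfl⟩

/-- The vertex map `A ↦ σ[A]` induced by `σ = Fin.rev : i ↦ N-1-i`. -/
def kgRevV (n N : ℕ) (A : KGVert n N) : KGVert n N :=
  ⟨A.1.image Fin.rev, by
    rw [Finset.card_image_of_injective _ Fin.rev_injective, A.2]⟩

lemma kgRevV_involutive (n N : ℕ) : Function.Involutive (kgRevV n N) := by
  intro A
  apply Subtype.ext
  show (A.1.image Fin.rev).image Fin.rev = A.1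
  rw [Finset.image_image]
  have : (Fin.rev ∘ Fin.rev : Fin N → Fin N) = id := funext fun i => Fin.rev_rev i
  rw [this, Finset.image_id]

/-- `σ` as a graph homomorphism of the Kneser graph. -/
def kgRevHom (n l : ℕ) : KG n l →g KG n l :=
  ⟨kgRevV n (2 * n + l), fun {A B} h => by
    show _ ≠ _ ∧ _
    constructor
    · intro e
      exact h.1 (kgRevV_involutive _ _ A ▸ kgRevV_involutive _ _ B ▸ congrArg (kgRevV n _) e)
    · show Disjoint (A.1.image Fin.rev) (B.1.image Fin.rev)
      rw [Finset.disjoint_image Fin.rev_injective]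
      exact h.2⟩

/-- The vertex `{0, …, 2r-1}` of `KG_{2r,2s}`. -/
def kneserE0 (r s : ℕ) : KGVert (2 * r) (2 * (2 * r) + 2 * s) :=
  ⟨(Finset.range (2 * r)).attachFin (fun m hm => by
      simp only [Finset.mem_range] at hm; omega),
   by rw [Finset.card_attachFin, Finset.card_range]⟩

/-- The vertex `{2r+2s, …, 4r+2s-1}` of `KG_{2r,2s}`. -/
def kneserE1 (r s : ℕ) : KGVert (2 * r) (2 * (2 * r) + 2 * s) :=
  ⟨(Finset.Ico (2 * r + 2 * s) (2 * (2 * r) + 2 * s)).attachFin (fun m hm => by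
      simp only [Finset.mem_Ico] at hm; omega),
   by rw [Finset.card_attachFin, Nat.card_Ico]; omega⟩

/-- The inclusion `{0,…,2r+s-1} ↪ {0,…,4r+2s-1}`. -/
def halfEmb (r s : ℕ) (i : Fin (2 * r + s)) : Fin (2 * (2 * r) + 2 * s) :=
  ⟨i.1, by omega⟩

/-- The `σ`-invariant `2r`-set `M ∪ σ[M]` associated to an `r`-set `M ⊆ {0,…,2r+s-1}`. -/
def bigV (r s : ℕ) (M : KGVert r (2 * r + s)) : KGVert (2 * r) (2 * (2 * r) + 2 * s) :=
  ⟨M.1.image (halfEmb r s) ∪ (M.1.image (halfEmb r s)).image Fin.rev, by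
    classical
    have hinj : Function.Injective (halfEmb r s) := fun a b h => by
      have h' := congrArg Fin.val h
      exact Fin.ext h'
    have hc1 : (M.1.image (halfEmb r s)).card = r := by
      rw [Finset.card_image_of_injective _ hinj, M.2]
    have hdisj : Disjoint (M.1.image (halfEmb r s))
        ((M.1.image (halfEmb r s)).image Fin.rev) := by
      rw [Finset.disjoint_left]
      intro a ha hb
      simp only [Finset.mem_image] at ha hb
      obtain ⟨x, hx, rfl⟩ := ha
      obtain ⟨b, ⟨y, hy, rfl⟩, he⟩ := hb
      have h2 := Fin.val_rev (halfEmb r s y)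
      have h5 : (halfEmb r s y).1 = y.1 := rfl
      have hx2 : x.1 < 2 * r + s := x.2
      have hy2 : y.1 < 2 * r + s := y.2
      have h3 : (Fin.rev (halfEmb r s y)).1 = (halfEmb r s x).1 := congrArg Fin.val he
      have h4 : (halfEmb r s x).1 = x.1 := rfl
      omega
    rw [Finset.card_union_of_disjoint hdisj, hc1,
        Finset.card_image_of_injective _ Fin.rev_injective, hc1]
    ring⟩

end

/- Proof idea: `σ = Fin.rev` maps the low half `{0,…,2r+s-1}` onto the high half. Hence `M ∪ σ[M]`
is `σ`-invariant, and for disjoint `M, N` in the low half the four pieces `M, σ[M], N, σ[N]` of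
`M ∪ σ[M]` and `N ∪ σ[N]` can meet only as `M ∩ N` or `σ[M] ∩ σ[N] = σ[M ∩ N]`. So disjoint
`r`-sets give adjacent fixed points of `σ`, which are adjacent in `(KG_{2r,2s})^{Z₂}`. -/

namespace Fin

variable {N : ℕ}

lemma mem_image_rev {X : Finset (Fin N)} {i : Fin N} : i ∈ X.image rev ↔ i.rev ∈ X := by
  rw [← rev_injective.mem_finset_image (s := X), rev_rev]

lemma image_rev_union_image_rev (X : Finset (Fin N)) :
    (X ∪ X.image rev).image rev = X ∪ X.image rev := by
  rw [Finset.image_union, Finset.image_image, rev_involutive.comp_self, Finset.image_id,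
    Finset.union_comm]

lemma disjoint_image_rev_of_forall_lt {K : ℕ} (hK : 2 * K ≤ N) {X Y : Finset (Fin N)}
    (hX : ∀ i ∈ X, (i : ℕ) < K) (hY : ∀ i ∈ Y, (i : ℕ) < K) : Disjoint X (Y.image rev) := by
  refine Finset.disjoint_left.2 fun i hiX hiY => ?_
  have := hX i hiX
  have := hY _ (mem_image_rev.1 hiY)
  rw [val_rev] at this
  omega

lemma disjoint_union_image_rev {K : ℕ} (hK : 2 * K ≤ N) {X Y : Finset (Fin N)}
    (hX : ∀ i ∈ X, (i : ℕ) < K) (hY : ∀ i ∈ Y, (i : ℕ) < K) (hXY : Disjoint X Y) :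
    Disjoint (X ∪ X.image rev) (Y ∪ Y.image rev) := by
  simp only [Finset.disjoint_union_left, Finset.disjoint_union_right]
  exact ⟨⟨hXY, (disjoint_image_rev_of_forall_lt hK hY hX).symm⟩,
    disjoint_image_rev_of_forall_lt hK hX hY,
    (Finset.disjoint_image rev_injective).2 hXY⟩

end Fin

lemma fixGraph_adj_of_apply_eq_self {V : Type*} {G : SimpleGraph V} {α : G →g G}
    {hα : Function.Involutive α} {u v : V} (hv : α v = v) (huv : G.Adj u v) :
    (fixGraph G α hα).Adj ⟨{u, α u}, u, rfl⟩ ⟨{v, α v}, v, rfl⟩ :=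
  ⟨u, v, rfl, rfl, huv, by rwa [hv]⟩

lemma KG.adj_iff_disjoint {n l : ℕ} (hn : 0 < n) {A B : KGVert n (2 * n + l)} :
    (KG n l).Adj A B ↔ Disjoint A.1 B.1 := by
  refine ⟨And.right, fun hAB => ⟨?_, hAB⟩⟩
  rintro rfl
  rw [Finset.disjoint_self_iff_empty] at hAB
  have := A.2
  rw [hAB, Finset.card_empty] at this
  omega

section KneserFlip

variable {r s : ℕ}

lemma mem_kneserE0 {i : Fin (2 * (2 * r) + 2 * s)} : i ∈ (kneserE0 r s).1 ↔ (i : ℕ) < 2 * r := by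
  simp [kneserE0]

lemma mem_kneserE1 {i : Fin (2 * (2 * r) + 2 * s)} :
    i ∈ (kneserE1 r s).1 ↔ 2 * r + 2 * s ≤ (i : ℕ) := by
  simp [kneserE1, i.2]

lemma kgRevV_kneserE0 : kgRevV _ _ (kneserE0 r s) = kneserE1 r s := by
  refine Subtype.ext (Finset.ext fun i => ?_)
  change i ∈ (kneserE0 r s).1.image Fin.rev ↔ _
  rw [Fin.mem_image_rev, mem_kneserE0, mem_kneserE1, Fin.val_rev]
  omega

lemma kneserE0_adj_kneserE1 (hr : 0 < r) :
    (KG (2 * r) (2 * s)).Adj (kneserE0 r s) (kneserE1 r s) := by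
  refine (KG.adj_iff_disjoint (by omega)).2 (Finset.disjoint_left.2 fun i hi0 hi1 => ?_)
  rw [mem_kneserE0] at hi0
  rw [mem_kneserE1] at hi1
  omega

lemma halfEmb_injective : Function.Injective (halfEmb r s) :=
  fun _ _ h => Fin.ext (Fin.mk.inj h)

lemma kgRevV_bigV (M : KGVert r (2 * r + s)) : kgRevV _ _ (bigV r s M) = bigV r s M :=
  Subtype.ext (Fin.image_rev_union_image_rev _)

lemma disjoint_bigV {M N : KGVert r (2 * r + s)} (hMN : Disjoint M.1 N.1) :
    Disjoint (bigV r s M).1 (bigV r s N).1 := by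
  have hlow : ∀ P : KGVert r (2 * r + s), ∀ i ∈ P.1.image (halfEmb r s), (i : ℕ) < 2 * r + s := by
    intro P i hi
    obtain ⟨j, -, rfl⟩ := Finset.mem_image.1 hi
    exact j.2
  exact Fin.disjoint_union_image_rev (by omega) (hlow M) (hlow N)
    ((Finset.disjoint_image halfEmb_injective).2 hMN)

lemma bigV_adj (hr : 0 < r) {M N : KGVert r (2 * r + s)} (hMN : (KG r s).Adj M N) :
    (KG (2 * r) (2 * s)).Adj (bigV r s M) (bigV r s N) :=
  (KG.adj_iff_disjoint (by omega)).2 (disjoint_bigV hMN.2)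

end KneserFlip

theorem kneser_flip_and_hom_to_fixGraph_general (r s : ℕ) (hr : 1 ≤ r) :
    ((∀ A B, (KG (2 * r) (2 * s)).Adj A B →
        (KG (2 * r) (2 * s)).Adj (kgRevV _ _ A) (kgRevV _ _ B)) ∧
      Function.Involutive (kgRevV (2 * r) (2 * (2 * r) + 2 * s)) ∧
      kgRevV _ _ (kneserE0 r s) = kneserE1 r s ∧
      (KG (2 * r) (2 * s)).Adj (kneserE0 r s) (kneserE1 r s)) ∧
    ∀ M N, (KG r s).Adj M N →
      (fixGraph (KG (2 * r) (2 * s)) (kgRevHom (2 * r) (2 * s))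
          (kgRevV_involutive _ _)).Adj
        ⟨{bigV r s M, kgRevV _ _ (bigV r s M)}, bigV r s M, rfl⟩
        ⟨{bigV r s N, kgRevV _ _ (bigV r s N)}, bigV r s N, rfl⟩ :=
  ⟨⟨fun _ _ h => (kgRevHom (2 * r) (2 * s)).map_adj h, kgRevV_involutive _ _,
      kgRevV_kneserE0, kneserE0_adj_kneserE1 hr⟩,
    fun _ N hMN => fixGraph_adj_of_apply_eq_self (kgRevV_bigV N) (bigV_adj hr hMN)⟩

theorem kneser_flip_and_hom_to_fixGraph (r s : ℕ) (hr : 1 ≤ r) (hs : 1 ≤ s) :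
    ((∀ A B, (KG (2 * r) (2 * s)).Adj A B →
        (KG (2 * r) (2 * s)).Adj (kgRevV _ _ A) (kgRevV _ _ B)) ∧
      Function.Involutive (kgRevV (2 * r) (2 * (2 * r) + 2 * s)) ∧
      kgRevV _ _ (kneserE0 r s) = kneserE1 r s ∧
      (KG (2 * r) (2 * s)).Adj (kneserE0 r s) (kneserE1 r s)) ∧
    ∀ M N, (KG r s).Adj M N →
      (fixGraph (KG (2 * r) (2 * s)) (kgRevHom (2 * r) (2 * s))
          (kgRevV_involutive _ _)).Adj
        ⟨{bigV r s M, kgRevV _ _ (bigV r s M)}, bigV r s M, rfl⟩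
        ⟨{bigV r s N, kgRevV _ _ (bigV r s N)}, bigV r s N, rfl⟩ :=
  kneser_flip_and_hom_to_fixGraph_general r s hr
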